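/- For every node Q_i of a 3-dimensional toric idealistic cluster A=(C,m) one has R_i = 3·m_i − 2·Σ_{j→i} m_j + Σ_{j→i} (Σ_{k: k→i and k↠j} m_k) + Σ_{j: i→j} (Σ_{k: k→j and k↠i} m_k) − Σ_{j: i→j} m_i. -/

import Mathlib

open Finset

/-!
Common framework: 3-dimensional toric constellations and toric idealistic clusters.
The edge labels `1, 2, 3` of the paper are encoded as `0, 1, 2 : Fin 3`.
-/

/-- A 3-dimensional toric constellation: a finite rooted tree on nodes `0, …, r−1`
(node `0` the root, every child having larger index than its parent), each node having
at most three children, the edges from a node to its children carrying pairwise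
distinct labels in `Fin 3`.  `label j` is the label of the edge from `parent j` to `j`
(irrelevant for the root). -/
structure ToricConstellation (r : ℕ) where
  parent : Fin r → Fin r
  label : Fin r → Fin 3
  parent_lt : ∀ i : Fin r, 0 < (i : ℕ) → (parent i : ℕ) < (i : ℕ)
  parent_root : ∀ i : Fin r, (i : ℕ) = 0 → parent i = i
  label_distinct : ∀ i j : Fin r, 0 < (i : ℕ) → 0 < (j : ℕ) → i ≠ j →
    parent i = parent j → label i ≠ label j

namespace ToricConstellation

variable {r : ℕ}

/-- The ordered triple of vectors of `ℤ³` attached to a node: the root carries the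
standard basis, and the child along the edge labelled `a` of a node with cone
`(u₁,u₂,u₃)` carries the triple obtained by replacing `u_a` with `u₁+u₂+u₃`. -/
def cone (C : ToricConstellation r) (i : Fin r) : Fin 3 → (Fin 3 → ℤ) :=
  if h : 0 < (i : ℕ) then
    Function.update (cone C (C.parent i)) (C.label i) (∑ a, cone C (C.parent i) a)
  else fun a => Pi.single a 1
termination_by (i : ℕ)
decreasing_by all_goals exact C.parent_lt i h

/-- `v(Q) = u₁ + u₂ + u₃`, the sum of the cone vectors of a node. -/
def v (C : ToricConstellation r) (i : Fin r) : Fin 3 → ℤ := ∑ a, cone C i a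

/-- `Prox C j i` means `j → i`, i.e. `Q_j` is proximate to `Q_i`:
`j ≠ i` and `v(Q_i)` is an entry of `cone(Q_j)`. -/
def Prox (C : ToricConstellation r) (j i : Fin r) : Prop :=
  j ≠ i ∧ ∃ a : Fin 3, cone C j a = v C i

instance (C : ToricConstellation r) (j i : Fin r) : Decidable (C.Prox j i) := by
  unfold Prox; infer_instance

/-- `inChain C i a b j = true` iff `j = Q_i(a, b^t)` for some `t ≥ 0`, i.e. `j` is
reached from `i` by one edge labelled `a` followed by `t` edges labelled `b`. -/
def inChain (C : ToricConstellation r) (i : Fin r) (a b : Fin 3) (j : Fin r) : Bool :=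
  if h : 0 < (j : ℕ) then
    (decide (C.parent j = i) && decide (C.label j = a)) ||
      (decide (C.label j = b) && inChain C i a b (C.parent j))
  else false
termination_by (j : ℕ)
decreasing_by exact C.parent_lt j h

/-- `LinProx C j i` means `j ↠ i`, i.e. `Q_j` is linearly proximate to `Q_i`. -/
def LinProx (C : ToricConstellation r) (j i : Fin r) : Prop :=
  ∃ a b : Fin 3, a ≠ b ∧ inChain C i a b j = true

instance (C : ToricConstellation r) (j i : Fin r) : Decidable (C.LinProx j i) := by
  unfold LinProx; infer_instance

/-- `j` is a child of `i`. -/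
def IsChild (C : ToricConstellation r) (j i : Fin r) : Prop :=
  0 < (j : ℕ) ∧ C.parent j = i

instance (C : ToricConstellation r) (j i : Fin r) : Decidable (C.IsChild j i) := by
  unfold IsChild; infer_instance

/-- The set `S_i` of labels of the edges on the path from the root to `Q_i`. -/
def labelsUnder (C : ToricConstellation r) (i : Fin r) : Finset (Fin 3) :=
  if h : 0 < (i : ℕ) then insert (C.label i) (labelsUnder C (C.parent i)) else ∅
termination_by (i : ℕ)
decreasing_by exact C.parent_lt i h

/-- `i` is a weak ancestor of `j` (`i = j` or `i` a strict ancestor of `j`). -/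
def anc (C : ToricConstellation r) (i j : Fin r) : Bool :=
  decide (i = j) || (if h : 0 < (j : ℕ) then anc C i (C.parent j) else false)
termination_by (j : ℕ)
decreasing_by exact C.parent_lt j h

/-- The set of nodes weakly above `i` (`i` together with its descendants). -/
def weakAbove (C : ToricConstellation r) (i : Fin r) : Finset (Fin r) :=
  univ.filter (fun j => anc C i j = true)

end ToricConstellation

/-- A 3-dimensional toric cluster: a toric constellation together with a positive
integer weight for each node. -/
structure ToricCluster (r : ℕ) extends ToricConstellation r where
  m : Fin r → ℤ
  m_pos : ∀ j, 0 < m j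

namespace ToricCluster

open ToricConstellation

variable {r : ℕ}

/-- `M_{Q_i}(a,b) := Σ_{t ≥ 0, Q_i(a,b^t) ∈ C} m_{Q_i(a,b^t)}`. -/
def M (A : ToricCluster r) (i : Fin r) (a b : Fin 3) : ℤ :=
  ∑ j ∈ univ.filter (fun j => inChain A.toToricConstellation i a b j = true), A.m j

/-- The cluster is idealistic: the linear proximity inequalities
`M_{Q_i}(a,b) + M_{Q_i}(b,a) ≤ m_{Q_i}` hold. -/
def Idealistic (A : ToricCluster r) : Prop :=
  ∀ i : Fin r, ∀ a b : Fin 3, a ≠ b → A.M i a b + A.M i b a ≤ A.m i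

/-- The set of nodes `j` proximate to `i` (`j → i`). -/
def proxSet (A : ToricCluster r) (i : Fin r) : Finset (Fin r) :=
  univ.filter (fun j => Prox A.toToricConstellation j i)

/-- `B_i`: the set of nodes to which `i` is proximate. -/
def Bset (A : ToricCluster r) (i : Fin r) : Finset (Fin r) :=
  univ.filter (fun j => Prox A.toToricConstellation i j)

/-- `A_i`: the children `k` of `i` for which there is no `l` with `i → l` and `k → l`. -/
def Aset (A : ToricCluster r) (i : Fin r) : Finset (Fin r) :=
  univ.filter (fun k => IsChild A.toToricConstellation k i ∧
    ¬ ∃ l, Prox A.toToricConstellation i l ∧ Prox A.toToricConstellation k l)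

/-- The Euler characteristic `χ_i = χ(E_i°)`. -/
def chi (A : ToricCluster r) (i : Fin r) : ℤ :=
  3 + A.m i * (A.m i - 3)
    - ∑ j ∈ A.proxSet i, A.m j * (A.m j - 1)
    + ∑ j ∈ A.proxSet i,
        (A.m j - ∑ k ∈ (A.proxSet i).filter
          (fun k => LinProx A.toToricConstellation k j), A.m k)
    + ∑ j ∈ A.Bset i,
        (A.m i - ∑ k ∈ (A.proxSet j).filter
          (fun k => LinProx A.toToricConstellation k i), A.m k)
    - ((A.Aset i).card : ℤ) - 2 * ((A.Bset i).card : ℤ)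
    + (((A.Bset i).card.choose 2 : ℕ) : ℤ)

/-- `D_i = m_i² − Σ_{j→i} m_j²`. -/
def D (A : ToricCluster r) (i : Fin r) : ℤ :=
  A.m i ^ 2 - ∑ j ∈ A.proxSet i, A.m j ^ 2

/-- `r_{ab} = m_i − M_{Q_i}(a,b) − M_{Q_i}(b,a)`. -/
def rab (A : ToricCluster r) (i : Fin r) (a b : Fin 3) : ℤ :=
  A.m i - A.M i a b - A.M i b a

/-- `R_i = r̂_{12} + r̂_{13} + r̂_{23}`, where `r̂_{ab} = r_{ab}` if the remaining third
label does not appear under `Q_i`, and `r̂_{ab} = 0` otherwise.  (Labels `1,2,3` are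
encoded as `0,1,2 : Fin 3`.) -/
def R (A : ToricCluster r) (i : Fin r) : ℤ :=
  (if (2 : Fin 3) ∉ labelsUnder A.toToricConstellation i then A.rab i 0 1 else 0)
  + (if (1 : Fin 3) ∉ labelsUnder A.toToricConstellation i then A.rab i 0 2 else 0)
  + (if (0 : Fin 3) ∉ labelsUnder A.toToricConstellation i then A.rab i 1 2 else 0)

/-- `T_i = 3 − #A_i − 2·#B_i + (#B_i choose 2)`. -/
def T (A : ToricCluster r) (i : Fin r) : ℤ :=
  3 - ((A.Aset i).card : ℤ) - 2 * ((A.Bset i).card : ℤ)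
    + (((A.Bset i).card.choose 2 : ℕ) : ℤ)

/-- The nodes to which `i` is proximate, of smaller index: the sums in the recursive
definitions of the numerical data range over the nodes to which `i` is proximate,
which are ancestors of `i` and hence have smaller index (making the recursion
well-founded). -/
def anteSet (A : ToricCluster r) (i : Fin r) : Finset (Fin r) :=
  univ.filter (fun j => (j : ℕ) < (i : ℕ) ∧ Prox A.toToricConstellation i j)

/-- The numerical datum `N_i := m_i + Σ_{j : i→j} N_j`. -/
def N (A : ToricCluster r) (i : Fin r) : ℤ :=
  A.m i + ∑ j ∈ (A.anteSet i).attach, N A j.1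
termination_by (i : ℕ)
decreasing_by
  have hj := j.2
  simp only [anteSet, Finset.mem_filter] at hj
  exact hj.2.1

/-- The numerical datum `ν_i := 3 + Σ_{j : i→j} (ν_j − 1)`. -/
def nu (A : ToricCluster r) (i : Fin r) : ℤ :=
  3 + ∑ j ∈ (A.anteSet i).attach, (nu A j.1 - 1)
termination_by (i : ℕ)
decreasing_by
  have hj := j.2
  simp only [anteSet, Finset.mem_filter] at hj
  exact hj.2.1

end ToricCluster


open ToricConstellation ToricCluster

/-!
Write `coneNode k a = some j` when the `a`-th vector of `cone(Q_k)` is `v(Q_j)`. The vectors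
`v(Q_j)` are pairwise distinct: below a child `c` of `w`, every `v` has positive coordinates in
the basis `cone(c)`, and this separates the subtrees of the children of `w` from each other and
from `w`. Hence `k → i` exactly when `coneNode k a = some i`, for a unique entry `a`, and `i` is
proximate to exactly `#S_i` nodes, one for each label in `S_i`.

Write `R_i = (3 - #S_i) m_i - Σ M_{Q_i}(a,b)`, the sum running over the ordered pairs `(a,b)`
whose third label is not in `S_i`. The identity then says that the two double sums and these
`M_{Q_i}(a,b)` together count every `m_k` with `k → i` exactly twice and no other `m_k`. Let
`k → i` through the entry `a`. If `k` is the child of `i` along `a`, it is counted once for each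
label other than `a`: through `B_i` if the label is in `S_i`, through an `M_{Q_i}(a,·)`
otherwise. If `k = Q_i(a, b^t)` with `t > 0`, it is counted once for its parent and once for the
third label. Otherwise `k` is not linearly proximate to `i`, and it is counted for the two nodes
`j → i` with `k ↠ j`: its parent `p`, and the node `j` with `p = Q_j(α, b^t)`, where `b` is the
label of the edge into `k`.
-/

lemma Finset.sum_sum_filter_eq_sum_card_mul {α β R : Type*} [NonAssocSemiring R] (s : Finset α)
    (t : Finset β) (q : α → β → Prop) [∀ x y, Decidable (q x y)] (f : β → R) :
    ∑ x ∈ s, ∑ y ∈ t with q x y, f y = ∑ y ∈ t, #{x ∈ s | q x y} * f y := by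
  simp only [Finset.sum_filter]
  rw [Finset.sum_comm]
  refine Finset.sum_congr rfl fun y _ => ?_
  rw [← Finset.sum_filter, Finset.sum_const, nsmul_eq_mul]

namespace ToricConstellation

variable {r : ℕ} (C : ToricConstellation r)

@[elab_as_elim]
theorem parent_induction {motive : Fin r → Prop} (root : ∀ k : Fin r, (k : ℕ) = 0 → motive k)
    (step : ∀ k : Fin r, 0 < (k : ℕ) → motive (C.parent k) → motive k) (k : Fin r) :
    motive k := by
  induction h : (k : ℕ) using Nat.strong_induction_on generalizing k with
  | _ n ih =>
    rcases Nat.eq_zero_or_pos n with hn | hn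
    · exact root k (h.trans hn)
    · exact step k (h ▸ hn) (ih _ (h ▸ C.parent_lt k (h ▸ hn)) _ rfl)

lemma cone_of_pos {j : Fin r} (hj : 0 < (j : ℕ)) :
    C.cone j = Function.update (C.cone (C.parent j)) (C.label j) (C.v (C.parent j)) := by
  rw [cone, dif_pos hj]; rfl

lemma cone_of_eq_zero {j : Fin r} (hj : (j : ℕ) = 0) : C.cone j = fun a => Pi.single a 1 := by
  rw [cone, dif_neg (by omega)]

lemma anc_iff {i j : Fin r} :
    C.anc i j = true ↔ i = j ∨ (0 < (j : ℕ) ∧ C.anc i (C.parent j) = true) := by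
  rw [anc]; split <;> simp [*]

lemma anc_self (i : Fin r) : C.anc i i = true := C.anc_iff.2 (Or.inl rfl)

lemma anc_of_anc_parent {i j : Fin r} (hj : 0 < (j : ℕ)) (h : C.anc i (C.parent j) = true) :
    C.anc i j = true :=
  C.anc_iff.2 (Or.inr ⟨hj, h⟩)

lemma anc_of_eq_zero {i : Fin r} (hi : (i : ℕ) = 0) (j : Fin r) : C.anc i j = true := by
  induction j using C.parent_induction with
  | root j hj => rw [Fin.ext (hi.trans hj.symm)]; exact C.anc_self j
  | step j hj ih => exact C.anc_of_anc_parent hj ih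

lemma exists_isChild_anc {w j : Fin r} (h : C.anc w j = true) (hne : w ≠ j) :
    ∃ c, C.IsChild c w ∧ C.anc c j = true := by
  induction j using C.parent_induction with
  | root j hj =>
    obtain rfl | ⟨hj', -⟩ := C.anc_iff.1 h
    · exact absurd rfl hne
    · omega
  | step j hj ih =>
    obtain rfl | ⟨-, hp⟩ := C.anc_iff.1 h
    · exact absurd rfl hne
    by_cases hwp : w = C.parent j
    · exact ⟨j, ⟨hj, hwp.symm⟩, C.anc_self j⟩
    · obtain ⟨c, hc, hcj⟩ := ih hp hwp
      exact ⟨c, hc, C.anc_of_anc_parent hj hcj⟩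

lemma anc_or_anc_or_exists_branch (p q : Fin r) :
    C.anc p q = true ∨ C.anc q p = true ∨
      ∃ w cp cq, C.IsChild cp w ∧ C.IsChild cq w ∧ cp ≠ cq ∧
        C.anc cp p = true ∧ C.anc cq q = true := by
  induction q using C.parent_induction with
  | root q hq => exact Or.inr (Or.inl (C.anc_of_eq_zero hq p))
  | step q hq ih =>
    rcases ih with h | h | ⟨w, cp, cq, hcp, hcq, hne, hp, hq'⟩
    · exact Or.inl (C.anc_of_anc_parent hq h)
    · by_cases hpq : C.parent q = p
      · exact Or.inl (C.anc_of_anc_parent hq (hpq ▸ C.anc_self _))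
      obtain ⟨c, hc, hcp⟩ := C.exists_isChild_anc h hpq
      by_cases hcq : c = q
      · exact Or.inr (Or.inl (hcq ▸ hcp))
      · exact Or.inr (Or.inr ⟨_, c, q, hc, ⟨hq, rfl⟩, hcq, hcp, C.anc_self q⟩)
    · exact Or.inr (Or.inr ⟨w, cp, cq, hcp, hcq, hne, hp, C.anc_of_anc_parent hq hq'⟩)

/-- The basis of `(ℤ³)^*` dual to `cone j`, see `dual_dotProduct_cone`. -/
def dual (j : Fin r) : Fin 3 → Fin 3 → ℤ :=
  if h : 0 < (j : ℕ) then
    fun x => if x = C.label j then dual (C.parent j) x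
      else dual (C.parent j) x - dual (C.parent j) (C.label j)
  else fun x => Pi.single x 1
termination_by (j : ℕ)
decreasing_by all_goals exact C.parent_lt j h

lemma dual_of_pos {j : Fin r} (hj : 0 < (j : ℕ)) (x : Fin 3) :
    C.dual j x = if x = C.label j then C.dual (C.parent j) x
      else C.dual (C.parent j) x - C.dual (C.parent j) (C.label j) := by
  rw [dual, dif_pos hj]

lemma dual_of_eq_zero {j : Fin r} (hj : (j : ℕ) = 0) (x : Fin 3) :
    C.dual j x = Pi.single x 1 := by
  rw [dual, dif_neg (by omega)]

lemma dual_dotProduct_v_of_forall {j : Fin r} {x : Fin 3}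
    (h : ∀ y, C.dual j x ⬝ᵥ C.cone j y = if x = y then 1 else 0) :
    C.dual j x ⬝ᵥ C.v j = 1 := by
  simp [v, dotProduct_sum, h]

lemma dual_dotProduct_cone (j : Fin r) (x y : Fin 3) :
    C.dual j x ⬝ᵥ C.cone j y = if x = y then 1 else 0 := by
  induction j using C.parent_induction generalizing x y with
  | root j hj => simp [C.dual_of_eq_zero hj, C.cone_of_eq_zero hj, Pi.single_apply, eq_comm]
  | step j hj ih =>
    have hv := fun x => C.dual_dotProduct_v_of_forall (ih x)
    rw [C.dual_of_pos hj, C.cone_of_pos hj]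
    by_cases hy : y = C.label j
    · subst hy
      split_ifs with hx <;> simp_all [sub_dotProduct]
    · have hy' : C.label j ≠ y := Ne.symm hy
      rw [Function.update_of_ne hy]
      split_ifs <;> simp_all [sub_dotProduct]

lemma dual_dotProduct_v (j : Fin r) (x : Fin 3) : C.dual j x ⬝ᵥ C.v j = 1 :=
  C.dual_dotProduct_v_of_forall (C.dual_dotProduct_cone j x)

/-- Each step replaces a cone vector by the sum of all three, which keeps the coordinates in
the basis `cone c` nonnegative. -/
lemma dual_dotProduct_cone_nonneg_and_v_pos {c p : Fin r} (h : C.anc c p = true) (x : Fin 3) :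
    (∀ y, 0 ≤ C.dual c x ⬝ᵥ C.cone p y) ∧ 0 < C.dual c x ⬝ᵥ C.v p := by
  have hself : (∀ y, 0 ≤ C.dual c x ⬝ᵥ C.cone c y) ∧ 0 < C.dual c x ⬝ᵥ C.v c :=
    ⟨fun y => by rw [C.dual_dotProduct_cone]; split_ifs <;> simp, by simp [C.dual_dotProduct_v]⟩
  induction p using C.parent_induction with
  | root p hp =>
    obtain rfl | ⟨hp', -⟩ := C.anc_iff.1 h
    exacts [hself, by omega]
  | step p hp ih =>
    obtain rfl | ⟨-, hcp⟩ := C.anc_iff.1 h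
    · exact hself
    obtain ⟨ihc, ihv⟩ := ih hcp
    have hcone : ∀ y, 0 ≤ C.dual c x ⬝ᵥ C.cone p y := by
      intro y
      rw [C.cone_of_pos hp, Function.update_apply]
      split_ifs
      exacts [ihv.le, ihc y]
    refine ⟨hcone, ?_⟩
    calc 0 < C.dual c x ⬝ᵥ C.cone p (C.label p) := by
          rwa [C.cone_of_pos hp, Function.update_self]
      _ ≤ ∑ y, C.dual c x ⬝ᵥ C.cone p y :=
          Finset.single_le_sum (fun y _ => hcone y) (Finset.mem_univ _)
      _ = C.dual c x ⬝ᵥ C.v p := by rw [v, dotProduct_sum]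

lemma v_pos (p : Fin r) (y : Fin 3) : 0 < C.v p y := by
  have hroot : ((⟨0, p.pos⟩ : Fin r) : ℕ) = 0 := rfl
  simpa [C.dual_of_eq_zero hroot] using
    (C.dual_dotProduct_cone_nonneg_and_v_pos (C.anc_of_eq_zero hroot p) y).2

lemma dual_label_dotProduct_v_lt {w c p : Fin r} (hc : C.IsChild c w) (h : C.anc c p = true)
    {x : Fin 3} (hx : x ≠ C.label c) :
    C.dual w (C.label c) ⬝ᵥ C.v p < C.dual w x ⬝ᵥ C.v p := by
  have := (C.dual_dotProduct_cone_nonneg_and_v_pos h x).2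
  rw [C.dual_of_pos hc.1, if_neg hx, hc.2, sub_dotProduct] at this
  linarith

lemma v_ne_of_anc {p q : Fin r} (h : C.anc p q = true) (hne : p ≠ q) : C.v p ≠ C.v q := by
  intro hv
  obtain ⟨c, hc, hcq⟩ := C.exists_isChild_anc h hne
  obtain ⟨x, hx⟩ := exists_ne (C.label c)
  have := C.dual_label_dotProduct_v_lt hc hcq hx
  rw [← hv, C.dual_dotProduct_v, C.dual_dotProduct_v] at this
  exact lt_irrefl _ this

lemma v_injective : Function.Injective C.v := by
  intro p q hv
  by_contra hne
  rcases C.anc_or_anc_or_exists_branch p q with h | h | ⟨w, cp, cq, hcp, hcq, hne', hp, hq⟩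
  · exact C.v_ne_of_anc h hne hv
  · exact C.v_ne_of_anc h (Ne.symm hne) hv.symm
  · have hlabel : C.label cp ≠ C.label cq :=
      C.label_distinct cp cq hcp.1 hcq.1 hne' (hcp.2.trans hcq.2.symm)
    have h₁ := C.dual_label_dotProduct_v_lt hcp hp hlabel.symm
    have h₂ := C.dual_label_dotProduct_v_lt hcq hq hlabel
    rw [hv] at h₁
    exact lt_asymm h₁ h₂

/-- The node `j` with `cone k a = v j`, or `none` when `cone k a` is still the basis vector
`e_a` (see `cone_eq_elim_coneNode`). -/
def coneNode (k : Fin r) (a : Fin 3) : Option (Fin r) :=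
  if h : 0 < (k : ℕ) then
    if C.label k = a then some (C.parent k) else coneNode (C.parent k) a
  else none
termination_by (k : ℕ)
decreasing_by exact C.parent_lt k h

lemma coneNode_of_pos {k : Fin r} (hk : 0 < (k : ℕ)) (a : Fin 3) :
    C.coneNode k a = if C.label k = a then some (C.parent k) else C.coneNode (C.parent k) a := by
  rw [coneNode, dif_pos hk]

lemma coneNode_of_eq_zero {k : Fin r} (hk : (k : ℕ) = 0) (a : Fin 3) : C.coneNode k a = none := by
  rw [coneNode, dif_neg (by omega)]

lemma coneNode_label {k : Fin r} (hk : 0 < (k : ℕ)) :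
    C.coneNode k (C.label k) = some (C.parent k) := by
  rw [C.coneNode_of_pos hk, if_pos rfl]

lemma coneNode_of_label_ne {k : Fin r} (hk : 0 < (k : ℕ)) {a : Fin 3} (ha : C.label k ≠ a) :
    C.coneNode k a = C.coneNode (C.parent k) a := by
  rw [C.coneNode_of_pos hk, if_neg ha]

lemma cone_eq_elim_coneNode (k : Fin r) (a : Fin 3) :
    C.cone k a = (C.coneNode k a).elim (Pi.single a 1) C.v := by
  induction k using C.parent_induction with
  | root k hk => rw [C.cone_of_eq_zero hk, C.coneNode_of_eq_zero hk]; rfl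
  | step k hk ih =>
    rw [C.cone_of_pos hk, C.coneNode_of_pos hk]
    by_cases h : C.label k = a
    · subst h
      rw [Function.update_self, if_pos rfl]; rfl
    · rw [Function.update_of_ne (Ne.symm h), if_neg h, ih]

lemma pos_of_coneNode_eq_some {k j : Fin r} {a : Fin 3} (h : C.coneNode k a = some j) :
    0 < (k : ℕ) := by
  by_contra hk
  rw [C.coneNode_of_eq_zero (by omega)] at h
  cases h

lemma coneNode_lt {k j : Fin r} {a : Fin 3} (h : C.coneNode k a = some j) :
    (j : ℕ) < (k : ℕ) := by
  induction k using C.parent_induction with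
  | root k hk => exact absurd (C.pos_of_coneNode_eq_some h) (by omega)
  | step k hk ih =>
    rw [C.coneNode_of_pos hk] at h
    have := C.parent_lt k hk
    split_ifs at h
    · cases h; exact this
    · exact (ih h).trans this

lemma coneNode_injective {k j : Fin r} {a b : Fin 3} (ha : C.coneNode k a = some j)
    (hb : C.coneNode k b = some j) : a = b := by
  induction k using C.parent_induction with
  | root k hk => exact absurd (C.pos_of_coneNode_eq_some ha) (by omega)
  | step k hk ih =>
    rw [C.coneNode_of_pos hk] at ha hb
    have hlt : ∀ {c}, C.coneNode (C.parent k) c ≠ some (C.parent k) :=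
      fun h => lt_irrefl _ (C.coneNode_lt h)
    by_cases h₁ : C.label k = a <;> by_cases h₂ : C.label k = b
    · exact h₁.symm.trans h₂
    · rw [if_pos h₁, Option.some.injEq] at ha
      rw [if_neg h₂, ← ha] at hb
      exact absurd hb hlt
    · rw [if_pos h₂, Option.some.injEq] at hb
      rw [if_neg h₁, ← hb] at ha
      exact absurd ha hlt
    · rw [if_neg h₁] at ha
      rw [if_neg h₂] at hb
      exact ih ha hb

lemma mem_labelsUnder_iff {k : Fin r} {a : Fin 3} :
    a ∈ C.labelsUnder k ↔ (C.coneNode k a).isSome := by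
  induction k using C.parent_induction with
  | root k hk => simp [labelsUnder, C.coneNode_of_eq_zero hk, show ¬ 0 < (k : ℕ) by omega]
  | step k hk ih =>
    rw [labelsUnder, dif_pos hk, Finset.mem_insert, C.coneNode_of_pos hk, ih]
    by_cases h : C.label k = a
    · simp [h]
    · simp [h, Ne.symm h]

lemma prox_iff_exists_coneNode {k i : Fin r} :
    C.Prox k i ↔ ∃ a, C.coneNode k a = some i := by
  constructor
  · rintro ⟨-, a, hcone⟩
    rw [cone_eq_elim_coneNode] at hcone
    refine ⟨a, ?_⟩
    cases hk : C.coneNode k a with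
    | none =>
      obtain ⟨y, hy⟩ := exists_ne a
      have := C.v_pos i y
      rw [hk, Option.elim_none] at hcone
      rw [← hcone, Pi.single_eq_of_ne hy] at this
      exact absurd this (lt_irrefl 0)
    | some j =>
      rw [hk, Option.elim_some] at hcone
      rw [C.v_injective hcone]
  · rintro ⟨a, ha⟩
    refine ⟨fun hki => ?_, a, by rw [cone_eq_elim_coneNode, ha]; rfl⟩
    exact absurd (C.coneNode_lt ha) (by rw [hki]; exact lt_irrefl _)

lemma prox_lt {k i : Fin r} (h : C.Prox k i) : (i : ℕ) < (k : ℕ) := by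
  obtain ⟨a, ha⟩ := C.prox_iff_exists_coneNode.1 h
  exact C.coneNode_lt ha

lemma not_prox_self (i : Fin r) : ¬ C.Prox i i := fun h => lt_irrefl _ (C.prox_lt h)

lemma inChain_iff {i k : Fin r} {a b : Fin 3} :
    C.inChain i a b k = true ↔ 0 < (k : ℕ) ∧ ((C.parent k = i ∧ C.label k = a) ∨
      (C.label k = b ∧ C.inChain i a b (C.parent k) = true)) := by
  rw [inChain]; split <;> simp [*]

lemma coneNode_of_inChain {i k : Fin r} {a b : Fin 3} (hab : a ≠ b)
    (h : C.inChain i a b k = true) : C.coneNode k a = some i := by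
  induction k using C.parent_induction with
  | root k hk => exact absurd (C.inChain_iff.1 h).1 (by omega)
  | step k hk ih =>
    obtain ⟨-, ⟨rfl, hl⟩ | ⟨hl, hp⟩⟩ := C.inChain_iff.1 h
    · rw [← hl, C.coneNode_label hk]
    · rw [C.coneNode_of_label_ne hk (hl ▸ hab.symm), ih hp]

lemma coneNode_of_inChain_of_ne {i k : Fin r} {a b c : Fin 3} (h : C.inChain i a b k = true)
    (hca : c ≠ a) (hcb : c ≠ b) : C.coneNode k c = C.coneNode i c := by
  induction k using C.parent_induction with
  | root k hk => exact absurd (C.inChain_iff.1 h).1 (by omega)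
  | step k hk ih =>
    obtain ⟨-, ⟨rfl, hl⟩ | ⟨hl, hp⟩⟩ := C.inChain_iff.1 h
    · rw [C.coneNode_of_label_ne hk (hl ▸ hca.symm)]
    · rw [C.coneNode_of_label_ne hk (hl ▸ hcb.symm), ih hp]

lemma eq_of_inChain_of_inChain {i j k : Fin r} {a a' b : Fin 3} (ha : a ≠ b) (ha' : a' ≠ b)
    (hi : C.inChain i a b k = true) (hj : C.inChain j a' b k = true) : i = j := by
  induction k using C.parent_induction with
  | root k hk => exact absurd (C.inChain_iff.1 hi).1 (by omega)
  | step k hk ih =>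
    obtain ⟨-, ⟨rfl, hl⟩ | ⟨hl, hp⟩⟩ := C.inChain_iff.1 hi <;>
      obtain ⟨-, ⟨rfl, hl'⟩ | ⟨hl', hp'⟩⟩ := C.inChain_iff.1 hj
    · rfl
    · exact absurd (hl.symm.trans hl') ha
    · exact absurd (hl'.symm.trans hl) ha'
    · exact ih hp hp'

lemma linProx_iff {k j : Fin r} (hk : 0 < (k : ℕ)) :
    C.LinProx k j ↔
      C.parent k = j ∨ ∃ a, a ≠ C.label k ∧ C.inChain j a (C.label k) (C.parent k) = true := by
  constructor
  · rintro ⟨a, b, hab, h⟩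
    obtain ⟨-, ⟨hp, -⟩ | ⟨rfl, hc⟩⟩ := C.inChain_iff.1 h
    exacts [Or.inl hp, Or.inr ⟨a, hab, hc⟩]
  · rintro (hp | ⟨a, ha, hc⟩)
    · obtain ⟨b, hb⟩ := exists_ne (C.label k)
      exact ⟨C.label k, b, hb.symm, C.inChain_iff.2 ⟨hk, Or.inl ⟨hp, rfl⟩⟩⟩
    · exact ⟨a, C.label k, ha, C.inChain_iff.2 ⟨hk, Or.inr ⟨rfl, hc⟩⟩⟩

lemma prox_of_linProx {k i : Fin r} (h : C.LinProx k i) : C.Prox k i := by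
  obtain ⟨a, b, hab, hc⟩ := h
  exact C.prox_iff_exists_coneNode.2 ⟨a, C.coneNode_of_inChain hab hc⟩

lemma exists_inChain_of_not_inChain {i x : Fin r} {a b : Fin 3} (hab : a ≠ b)
    (hx : C.coneNode x a = some i) (hnot : C.inChain i a b x ≠ true) :
    ∃ j α, α ≠ b ∧ C.inChain j α b x = true ∧ C.coneNode j a = some i := by
  induction x using C.parent_induction with
  | root x h0 => exact absurd (C.pos_of_coneNode_eq_some hx) (by omega)
  | step x hx0 ih =>
    by_cases hlb : C.label x = b
    · rw [C.coneNode_of_label_ne hx0 (hlb ▸ hab.symm)] at hx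
      have hnot' : C.inChain i a b (C.parent x) ≠ true :=
        fun h => hnot (C.inChain_iff.2 ⟨hx0, Or.inr ⟨hlb, h⟩⟩)
      obtain ⟨j, α, hα, hj, hja⟩ := ih hx hnot'
      exact ⟨j, α, hα, C.inChain_iff.2 ⟨hx0, Or.inr ⟨hlb, hj⟩⟩, hja⟩
    · have hla : C.label x ≠ a := by
        rintro rfl
        rw [C.coneNode_label hx0, Option.some.injEq] at hx
        exact hnot (C.inChain_iff.2 ⟨hx0, Or.inl ⟨hx, rfl⟩⟩)
      refine ⟨C.parent x, C.label x, hlb, C.inChain_iff.2 ⟨hx0, Or.inl ⟨rfl, rfl⟩⟩, ?_⟩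
      rwa [C.coneNode_of_label_ne hx0 hla] at hx

/-- For `S = S_i`, the ordered pairs `(a, b)` whose `M_{Q_i}(a,b)` enters `R_i` through
`r̂_{ab}`. -/
def chainPairs (S : Finset (Fin 3)) : Finset (Fin 3 × Fin 3) := {p | p.1 ≠ p.2 ∧ S ⊆ {p.1, p.2}}

lemma subset_pair_iff_notMem {S : Finset (Fin 3)} (a b c : Fin 3) (hab : a ≠ b) (hbc : b ≠ c)
    (hac : a ≠ c) : S ⊆ {a, b} ↔ c ∉ S := by
  have key : ∀ a b c : Fin 3, a ≠ b → b ≠ c → a ≠ c → ∀ S : Finset (Fin 3),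
      (S ⊆ {a, b} ↔ c ∉ S) := by decide
  exact key a b c hab hbc hac S

lemma card_compl_singleton_filter_add_card_chainPairs (S : Finset (Fin 3)) (a : Fin 3) :
    #{γ ∈ {a}ᶜ | γ ∈ S} + #{p ∈ chainPairs S | p.1 = a} = 2 := by
  revert S a; decide

lemma card_compl_pair_filter_add_card_chainPairs (S : Finset (Fin 3)) {a b : Fin 3}
    (hab : a ≠ b) : #{γ ∈ {a, b}ᶜ | γ ∈ S} + #{p ∈ chainPairs S | p = (a, b)} = 1 := by
  revert S a b; decide

lemma card_prox_and_prox {i k : Fin r} (T : Finset (Fin 3))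
    (hT : ∀ γ ∈ T, C.coneNode k γ = C.coneNode i γ)
    (hTc : ∀ γ ∉ T, ∀ j, C.coneNode k γ = some j → (i : ℕ) ≤ j) :
    #{j | C.Prox i j ∧ C.Prox k j} = #{γ ∈ T | γ ∈ C.labelsUnder i} := by
  symm
  refine Finset.card_bij (fun γ hγ => (C.coneNode i γ).get ?_) (fun γ hγ => ?_)
    (fun γ hγ γ' hγ' h => ?_) (fun j hj => ?_)
  · exact C.mem_labelsUnder_iff.1 (Finset.mem_filter.1 hγ).2
  · obtain ⟨hγT, -⟩ := Finset.mem_filter.1 hγ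
    simp only [Finset.mem_filter, Finset.mem_univ, true_and, C.prox_iff_exists_coneNode]
    exact ⟨⟨γ, (Option.some_get _).symm⟩, ⟨γ, by rw [hT γ hγT, Option.some_get]⟩⟩
  · exact C.coneNode_injective (Option.some_get _).symm (by rw [h]; exact (Option.some_get _).symm)
  · simp only [Finset.mem_filter, Finset.mem_univ, true_and] at hj
    obtain ⟨γ, hγ⟩ := C.prox_iff_exists_coneNode.1 hj.2
    have hγT : γ ∈ T := by
      by_contra hγT
      exact absurd (hTc γ hγT j hγ) (not_le.2 (C.prox_lt hj.1))
    rw [hT γ hγT] at hγ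
    exact ⟨γ, Finset.mem_filter.2 ⟨hγT, C.mem_labelsUnder_iff.2 (by simp [hγ])⟩, by simp [hγ]⟩

lemma eq_of_inChain_of_coneNode {i k : Fin r} {a α β : Fin 3} (ha : C.coneNode k a = some i)
    (hαβ : α ≠ β) (h : C.inChain i α β k = true) : α = a :=
  C.coneNode_injective (C.coneNode_of_inChain hαβ h) ha

/-- The number of times `m_k` is counted on the right-hand side of the identity by the sums
`Σ_{j → i} Σ_{k → i, k ↠ j}` and `Σ_{i → j} Σ_{k → j, k ↠ i}`, and by the `M_{Q_i}(a,b)` that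
enter `R_i`. -/
def proxCount (i k : Fin r) : ℕ :=
  (if C.Prox k i then #{j | C.Prox j i ∧ C.LinProx k j} else 0)
    + (if C.LinProx k i then #{j | C.Prox i j ∧ C.Prox k j} else 0)
    + #{p ∈ chainPairs (C.labelsUnder i) | C.inChain i p.1 p.2 k}

lemma proxCount_of_parent_eq {i k : Fin r} {a : Fin 3} (ha : C.coneNode k a = some i)
    (hp : C.parent k = i) : C.proxCount i k = 2 := by
  have hk := C.pos_of_coneNode_eq_some ha
  have hl : C.label k = a := by
    by_contra hl
    rw [C.coneNode_of_label_ne hk hl, hp] at ha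
    exact lt_irrefl _ (C.coneNode_lt ha)
  have hX : #{j | C.Prox j i ∧ C.LinProx k j} = 0 := by
    refine Finset.card_eq_zero.2 (Finset.filter_eq_empty_iff.2 fun j _ ⟨hj, hkj⟩ => ?_)
    rcases (C.linProx_iff hk).1 hkj with rfl | ⟨α, hα, hc⟩
    · exact C.not_prox_self _ (hp ▸ hj)
    · have := C.coneNode_lt (C.coneNode_of_inChain hα hc)
      have := C.prox_lt hj
      omega
  have hY : #{j | C.Prox i j ∧ C.Prox k j} = #{γ ∈ {a}ᶜ | γ ∈ C.labelsUnder i} := by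
    refine C.card_prox_and_prox _ (fun γ hγ => ?_) (fun γ hγ j hj => ?_)
    · have hγa : a ≠ γ := fun h => Finset.mem_compl.1 hγ (Finset.mem_singleton.2 h.symm)
      rw [C.coneNode_of_label_ne hk (hl ▸ hγa), hp]
    · rw [Finset.mem_compl, not_not, Finset.mem_singleton] at hγ
      rw [hγ, ha, Option.some.injEq] at hj
      exact hj.le
  have hZ : {p ∈ chainPairs (C.labelsUnder i) | C.inChain i p.1 p.2 k}
      = {p ∈ chainPairs (C.labelsUnder i) | p.1 = a} := by
    refine Finset.filter_congr fun p hp' => ⟨C.eq_of_inChain_of_coneNode ha ?_, fun h => ?_⟩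
    · exact (Finset.mem_filter.1 hp').2.1
    · exact C.inChain_iff.2 ⟨hk, Or.inl ⟨hp, hl.trans h.symm⟩⟩
  rw [proxCount, if_pos (C.prox_iff_exists_coneNode.2 ⟨a, ha⟩), hX,
    if_pos ((C.linProx_iff hk).2 (Or.inl hp)), hY, hZ, zero_add]
  exact card_compl_singleton_filter_add_card_chainPairs _ _

lemma ne_label_and_coneNode_parent {i k : Fin r} {a : Fin 3} (ha : C.coneNode k a = some i)
    (hp : C.parent k ≠ i) : a ≠ C.label k ∧ C.coneNode (C.parent k) a = some i := by
  have hk := C.pos_of_coneNode_eq_some ha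
  have hab : a ≠ C.label k := by
    rintro rfl
    rw [C.coneNode_label hk, Option.some.injEq] at ha
    exact hp ha
  exact ⟨hab, by rwa [C.coneNode_of_label_ne hk hab.symm] at ha⟩

lemma proxCount_of_inChain {i k : Fin r} {a : Fin 3} (ha : C.coneNode k a = some i)
    (hp : C.parent k ≠ i)
    (hc : C.inChain i a (C.label k) (C.parent k) = true) : C.proxCount i k = 2 := by
  have hk := C.pos_of_coneNode_eq_some ha
  obtain ⟨hab, hpa⟩ := C.ne_label_and_coneNode_parent ha hp
  have hck : C.inChain i a (C.label k) k = true := C.inChain_iff.2 ⟨hk, Or.inr ⟨rfl, hc⟩⟩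
  have hX : ({j | C.Prox j i ∧ C.LinProx k j} : Finset (Fin r)) = {C.parent k} := by
    ext j
    simp only [Finset.mem_filter, Finset.mem_univ, true_and, Finset.mem_singleton]
    constructor
    · rintro ⟨hj, hkj⟩
      rcases (C.linProx_iff hk).1 hkj with h | ⟨α, hα, hcj⟩
      · exact h.symm
      · obtain rfl := C.eq_of_inChain_of_inChain hab hα hc hcj
        exact absurd hj (C.not_prox_self _)
    · rintro rfl
      exact ⟨C.prox_iff_exists_coneNode.2 ⟨a, hpa⟩, (C.linProx_iff hk).2 (Or.inl rfl)⟩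
  have hY : #{j | C.Prox i j ∧ C.Prox k j} = #{γ ∈ {a, C.label k}ᶜ | γ ∈ C.labelsUnder i} := by
    refine C.card_prox_and_prox _ (fun γ hγ => ?_) (fun γ hγ j hj => ?_)
    · simp only [Finset.mem_compl, Finset.mem_insert, Finset.mem_singleton, not_or] at hγ
      exact C.coneNode_of_inChain_of_ne hck hγ.1 hγ.2
    · simp only [Finset.mem_compl, Finset.mem_insert, Finset.mem_singleton, not_or, not_and_or,
        not_not] at hγ
      rcases hγ with rfl | rfl
      · rw [ha, Option.some.injEq] at hj
        exact hj.le
      · rw [C.coneNode_label hk, Option.some.injEq] at hj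
        exact hj ▸ (C.coneNode_lt hpa).le
  have hZ : {p ∈ chainPairs (C.labelsUnder i) | C.inChain i p.1 p.2 k}
      = {p ∈ chainPairs (C.labelsUnder i) | p = (a, C.label k)} := by
    refine Finset.filter_congr fun p hp' => ⟨fun h => ?_, fun h => h ▸ hck⟩
    have hne := (Finset.mem_filter.1 hp').2.1
    obtain rfl := C.eq_of_inChain_of_coneNode ha hne h
    obtain ⟨-, ⟨hpk, -⟩ | ⟨hl, -⟩⟩ := C.inChain_iff.1 h
    · exact absurd hpk hp
    · exact Prod.ext rfl hl.symm
  rw [proxCount, if_pos (C.prox_iff_exists_coneNode.2 ⟨a, ha⟩), hX, Finset.card_singleton,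
    if_pos ⟨a, C.label k, hab, hck⟩, hY, hZ, add_assoc,
    card_compl_pair_filter_add_card_chainPairs _ hab]

lemma proxCount_of_not_inChain {i k : Fin r} {a : Fin 3} (ha : C.coneNode k a = some i)
    (hp : C.parent k ≠ i)
    (hc : C.inChain i a (C.label k) (C.parent k) ≠ true) : C.proxCount i k = 2 := by
  have hk := C.pos_of_coneNode_eq_some ha
  obtain ⟨hab, hpa⟩ := C.ne_label_and_coneNode_parent ha hp
  obtain ⟨j₀, α₀, hα₀, hj₀, hj₀a⟩ := C.exists_inChain_of_not_inChain hab hpa hc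
  have hX : ({j | C.Prox j i ∧ C.LinProx k j} : Finset (Fin r)) = {C.parent k, j₀} := by
    ext j
    simp only [Finset.mem_filter, Finset.mem_univ, true_and, Finset.mem_insert,
      Finset.mem_singleton]
    constructor
    · rintro ⟨-, hkj⟩
      rcases (C.linProx_iff hk).1 hkj with h | ⟨α, hα, hcj⟩
      · exact Or.inl h.symm
      · exact Or.inr (C.eq_of_inChain_of_inChain hα hα₀ hcj hj₀)
    · rintro (rfl | rfl)
      · exact ⟨C.prox_iff_exists_coneNode.2 ⟨a, hpa⟩, (C.linProx_iff hk).2 (Or.inl rfl)⟩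
      · exact ⟨C.prox_iff_exists_coneNode.2 ⟨a, hj₀a⟩,
          (C.linProx_iff hk).2 (Or.inr ⟨α₀, hα₀, hj₀⟩)⟩
  have hj₀p : C.parent k ≠ j₀ :=
    fun h => lt_irrefl _ (h ▸ C.coneNode_lt (C.coneNode_of_inChain hα₀ hj₀))
  have hL : ¬ C.LinProx k i := by
    intro hki
    rcases (C.linProx_iff hk).1 hki with h | ⟨α, hα, hci⟩
    · exact hp h
    · obtain rfl := C.coneNode_injective (C.coneNode_of_inChain hα hci) hpa
      exact hc hci
  have hZ : {p ∈ chainPairs (C.labelsUnder i) | C.inChain i p.1 p.2 k} = ∅ := by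
    refine Finset.filter_eq_empty_iff.2 fun p hp' h => ?_
    obtain rfl := C.eq_of_inChain_of_coneNode ha (Finset.mem_filter.1 hp').2.1 h
    obtain ⟨-, ⟨hpk, -⟩ | ⟨hl, hci⟩⟩ := C.inChain_iff.1 h
    · exact hp hpk
    · exact hc (hl ▸ hci)
  rw [proxCount, if_pos (C.prox_iff_exists_coneNode.2 ⟨a, ha⟩), hX, Finset.card_pair hj₀p,
    if_neg hL, hZ, Finset.card_empty]

lemma proxCount_eq (i k : Fin r) : C.proxCount i k = if C.Prox k i then 2 else 0 := by
  by_cases hki : C.Prox k i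
  · obtain ⟨a, ha⟩ := C.prox_iff_exists_coneNode.1 hki
    rw [if_pos hki]
    by_cases hp : C.parent k = i
    · exact C.proxCount_of_parent_eq ha hp
    by_cases hc : C.inChain i a (C.label k) (C.parent k) = true
    · exact C.proxCount_of_inChain ha hp hc
    · exact C.proxCount_of_not_inChain ha hp hc
  · have hL : ¬ C.LinProx k i := fun h => hki (C.prox_of_linProx h)
    have hZ : {p ∈ chainPairs (C.labelsUnder i) | C.inChain i p.1 p.2 k} = ∅ :=
      Finset.filter_eq_empty_iff.2 fun p hp h => hki (C.prox_iff_exists_coneNode.2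
        ⟨p.1, C.coneNode_of_inChain (Finset.mem_filter.1 hp).2.1 h⟩)
    rw [proxCount, if_neg hki, if_neg hki, if_neg hL, hZ, Finset.card_empty]

end ToricConstellation

namespace ToricCluster

variable {r : ℕ} (A : ToricCluster r)

lemma R_eq (i : Fin r) :
    A.R i = (3 - #(A.labelsUnder i)) * A.m i
      - ∑ p ∈ chainPairs (A.labelsUnder i), A.M i p.1 p.2 := by
  simp only [R, rab]
  generalize A.labelsUnder i = S
  have hcard : (#S : ℤ) = ∑ c : Fin 3, if c ∈ S then 1 else 0 := by simp
  simp only [chainPairs, Finset.sum_filter, Fintype.sum_prod_type, Fin.sum_univ_three, hcard]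
  simp (disch := decide) only [subset_pair_iff_notMem 0 1 2, subset_pair_iff_notMem 1 0 2,
    subset_pair_iff_notMem 0 2 1, subset_pair_iff_notMem 2 0 1, subset_pair_iff_notMem 1 2 0,
    subset_pair_iff_notMem 2 1 0, ne_eq, not_true_eq_false, false_and, if_false, Fin.reduceEq,
    not_false_eq_true, true_and]
  split_ifs <;> ring

lemma card_Bset (i : Fin r) : #(A.Bset i) = #(A.labelsUnder i) := by
  have h := A.card_prox_and_prox (k := i) Finset.univ (fun _ _ => rfl)
    (fun γ hγ => absurd (Finset.mem_univ γ) hγ)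
  simpa [Bset] using h

lemma sum_proxSet_sum_linProx (i : Fin r) :
    ∑ j ∈ A.proxSet i, ∑ k ∈ (A.proxSet i).filter (fun k => A.LinProx k j), A.m k
      = ∑ k, ((if A.Prox k i then #{j | A.Prox j i ∧ A.LinProx k j} else 0 : ℕ) : ℤ) * A.m k := by
  rw [Finset.sum_sum_filter_eq_sum_card_mul, proxSet, Finset.sum_filter]
  refine Finset.sum_congr rfl fun k _ => ?_
  split_ifs
  · rw [Finset.filter_filter]
  · simp

lemma sum_Bset_sum_linProx (i : Fin r) :
    ∑ j ∈ A.Bset i, ∑ k ∈ (A.proxSet j).filter (fun k => A.LinProx k i), A.m k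
      = ∑ k, ((if A.LinProx k i then #{j | A.Prox i j ∧ A.Prox k j} else 0 : ℕ) : ℤ) * A.m k := by
  have hcomm : ∀ j, (A.proxSet j).filter (fun k => A.LinProx k i)
      = ({k | A.LinProx k i} : Finset (Fin r)).filter (fun k => A.Prox k j) :=
    fun j => Finset.filter_comm _ _ _
  rw [Finset.sum_congr rfl fun j _ => by rw [hcomm j], Finset.sum_sum_filter_eq_sum_card_mul,
    Finset.sum_filter]
  refine Finset.sum_congr rfl fun k _ => ?_
  split_ifs
  · rw [Bset, Finset.filter_filter]
  · simp

lemma sum_chainPairs_M (i : Fin r) :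
    ∑ p ∈ chainPairs (A.labelsUnder i), A.M i p.1 p.2
      = ∑ k, (#{p ∈ chainPairs (A.labelsUnder i) | A.inChain i p.1 p.2 k} : ℤ) * A.m k := by
  simp only [M]
  rw [Finset.sum_sum_filter_eq_sum_card_mul]

lemma two_mul_sum_proxSet (i : Fin r) :
    2 * ∑ j ∈ A.proxSet i, A.m j
      = (∑ j ∈ A.proxSet i, ∑ k ∈ (A.proxSet i).filter (fun k => A.LinProx k j), A.m k)
      + (∑ j ∈ A.Bset i, ∑ k ∈ (A.proxSet j).filter (fun k => A.LinProx k i), A.m k)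
      + ∑ p ∈ chainPairs (A.labelsUnder i), A.M i p.1 p.2 := by
  have hP : 2 * ∑ j ∈ A.proxSet i, A.m j
      = ∑ k, ((if A.Prox k i then 2 else 0 : ℕ) : ℤ) * A.m k := by
    rw [proxSet, Finset.mul_sum, Finset.sum_filter]
    refine Finset.sum_congr rfl fun k _ => ?_
    split_ifs <;> simp
  rw [hP, A.sum_proxSet_sum_linProx, A.sum_Bset_sum_linProx, A.sum_chainPairs_M,
    ← Finset.sum_add_distrib, ← Finset.sum_add_distrib]
  refine Finset.sum_congr rfl fun k _ => ?_
  rw [← A.proxCount_eq i k, proxCount]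
  push_cast
  ring

end ToricCluster

theorem stmt2_general {r : ℕ} (A : ToricCluster r) (i : Fin r) :
    A.R i = 3 * A.m i - 2 * ∑ j ∈ A.proxSet i, A.m j
      + (∑ j ∈ A.proxSet i, ∑ k ∈ (A.proxSet i).filter
          (fun k => LinProx A.toToricConstellation k j), A.m k)
      + (∑ j ∈ A.Bset i, ∑ k ∈ (A.proxSet j).filter
          (fun k => LinProx A.toToricConstellation k i), A.m k)
      - ∑ _j ∈ A.Bset i, A.m i := by
  rw [A.R_eq i, A.two_mul_sum_proxSet i, Finset.sum_const, A.card_Bset i, nsmul_eq_mul]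
  ring

theorem stmt2 {r : ℕ} (A : ToricCluster r) (hA : A.Idealistic) (i : Fin r) :
    A.R i = 3 * A.m i - 2 * ∑ j ∈ A.proxSet i, A.m j
      + (∑ j ∈ A.proxSet i, ∑ k ∈ (A.proxSet i).filter
          (fun k => LinProx A.toToricConstellation k j), A.m k)
      + (∑ j ∈ A.Bset i, ∑ k ∈ (A.proxSet j).filter
          (fun k => LinProx A.toToricConstellation k i), A.m k)
      - ∑ _j ∈ A.Bset i, A.m i :=
  stmt2_general A i
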